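/- Let K ⊆ ℕ be infinite and suppose the limits γ_1 = lim_{k ∈ K} q_{k+1}/q_k and δ_1 = lim_{k ∈ K} η_{k+1}/η_k exist and are finite. Then lim_{k ∈ K} q_k η_k = 1/(γ_1 + δ_1). -/

import Mathlib

/-!
Write `x_k = q_k α - p_k` and `β_k` for the Gauss tails of `α`. The recursions for `p` and `q`
give `x_{k+1} = -β_{k+1} x_k`, so consecutive errors have opposite signs, and the determinant
identity `p_{k+1} q_k - p_k q_{k+1} = ±1` then reads `q_{k+1} η_k + q_k η_{k+1} = 1`. Dividing by
`q_k η_k` gives `q_k η_k = 1 / (q_{k+1}/q_k + η_{k+1}/η_k)`, and we pass to the limit along `K`;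
since `q` is nondecreasing, `γ_1 ≥ 1`, so the limit of the denominator is nonzero.
-/

open MeasureTheory Filter Set Topology

/-- Iterates of the Gauss map starting at `α`; `cfTail α k` has continued
fraction expansion `[c_{k+1}, c_{k+2}, ...]` when `α = [c_1, c_2, ...]`. -/
noncomputable def cfTail (α : ℝ) : ℕ → ℝ
  | 0 => α
  | n + 1 => Int.fract (1 / cfTail α n)

/-- `cfC α k` is the partial quotient `c_{k+1}` of the continued fraction of `α`. -/
noncomputable def cfC (α : ℝ) (k : ℕ) : ℤ := ⌊1 / cfTail α k⌋

/-- Numerators of the convergents: `p 0 = 0`, `p 1 = 1`, `p k = c_k p_{k-1} + p_{k-2}`. -/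
noncomputable def cfP (α : ℝ) : ℕ → ℤ
  | 0 => 0
  | 1 => 1
  | k + 2 => cfC α (k + 1) * cfP α (k + 1) + cfP α k

/-- Denominators of the convergents: `q 0 = 1`, `q 1 = c_1`, `q k = c_k q_{k-1} + q_{k-2}`. -/
noncomputable def cfQ (α : ℝ) : ℕ → ℤ
  | 0 => 1
  | 1 => cfC α 0
  | k + 2 => cfC α (k + 1) * cfQ α (k + 1) + cfQ α k

/-- `η_k = |q_k α - p_k|`. -/
noncomputable def cfEta (α : ℝ) (k : ℕ) : ℝ := |(cfQ α k : ℝ) * α - (cfP α k : ℝ)|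

lemma abs_sub_eq_abs_add_abs_of_mul_nonpos {a b : ℝ} (h : a * b ≤ 0) :
    |a - b| = |a| + |b| := by
  rw [← sq_eq_sq₀ (abs_nonneg _) (by positivity), sq_abs, add_sq, sq_abs, sq_abs, mul_assoc,
    ← abs_mul, abs_of_nonpos h]
  ring

lemma tendsto_of_mul_add_eq_one {ι : Type*} {l : Filter ι} {a f g : ι → ℝ} {γ δ : ℝ}
    (h : ∀ k, a k * (f k + g k) = 1) (hf : Tendsto f l (𝓝 γ)) (hg : Tendsto g l (𝓝 δ))
    (hγδ : γ + δ ≠ 0) : Tendsto a l (𝓝 (1 / (γ + δ))) := by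
  have ha : a = fun k => 1 / (f k + g k) := funext fun k => eq_one_div_of_mul_eq_one_left (h k)
  exact ha ▸ tendsto_const_nhds.div (hf.add hg) hγδ

variable {α : ℝ}

lemma cfTail_succ (k : ℕ) : cfTail α (k + 1) = 1 / cfTail α k - cfC α k := by
  rw [cfTail, cfC, Int.fract]

lemma Irrational.cfTail (hirr : Irrational α) : ∀ k, Irrational (cfTail α k)
  | 0 => hirr
  | k + 1 => by
    rw [cfTail_succ, one_div]
    exact (hirr.cfTail k).inv.sub_intCast _

lemma cfTail_succ_pos (hirr : Irrational α) (k : ℕ) : 0 < cfTail α (k + 1) :=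
  Int.fract_pos.2 <| by rw [one_div]; exact (hirr.cfTail k).inv.ne_int _

lemma cfTail_mem_Ioo (hirr : Irrational α) (hα : α ∈ Ioo 0 1) :
    ∀ k, cfTail α k ∈ Ioo 0 1
  | 0 => hα
  | _ + 1 => ⟨cfTail_succ_pos hirr _, Int.fract_lt_one _⟩

lemma one_le_cfC (hirr : Irrational α) (hα : α ∈ Ioo 0 1) (k : ℕ) : 1 ≤ cfC α k := by
  obtain ⟨h0, h1⟩ := cfTail_mem_Ioo hirr hα k
  exact Int.le_floor.2 (by simpa using one_le_one_div h0 h1.le)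

lemma one_le_cfQ (hirr : Irrational α) (hα : α ∈ Ioo 0 1) : ∀ k, 1 ≤ cfQ α k
  | 0 => le_rfl
  | 1 => one_le_cfC hirr hα 0
  | k + 2 => by
    have := one_le_cfQ hirr hα k
    have := one_le_cfQ hirr hα (k + 1)
    have := one_le_cfC hirr hα (k + 1)
    rw [cfQ]
    nlinarith

lemma cfQ_pos (hirr : Irrational α) (hα : α ∈ Ioo 0 1) (k : ℕ) : (0 : ℝ) < cfQ α k := by
  exact_mod_cast (one_le_cfQ hirr hα k).trans_lt' zero_lt_one

lemma cfQ_le_cfQ_succ (hirr : Irrational α) (hα : α ∈ Ioo 0 1) :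
    ∀ k, cfQ α k ≤ cfQ α (k + 1)
  | 0 => one_le_cfC hirr hα 0
  | k + 1 => by
    have := one_le_cfQ hirr hα k
    have := one_le_cfQ hirr hα (k + 1)
    have := one_le_cfC hirr hα (k + 1)
    rw [cfQ]
    nlinarith

lemma cfP_mul_cfQ_sub_cfP_mul_cfQ (k : ℕ) :
    cfP α (k + 1) * cfQ α k - cfP α k * cfQ α (k + 1) = (-1) ^ k := by
  induction k with
  | zero => simp [cfP, cfQ]
  | succ k ih =>
    rw [cfP, cfQ, pow_succ, ← ih]
    ring

noncomputable def cfErr (α : ℝ) (k : ℕ) : ℝ := cfQ α k * α - cfP α k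

lemma cfErr_succ (hirr : Irrational α) (k : ℕ) :
    cfErr α (k + 1) = -cfTail α (k + 1) * cfErr α k := by
  induction k with
  | zero =>
    have hα : α ≠ 0 := hirr.ne_zero
    rw [cfTail_succ]
    simp only [cfErr, cfP, cfQ, cfTail]
    push_cast
    field_simp
    ring
  | succ k ih =>
    have hβ : cfTail α (k + 1) ≠ 0 := (hirr.cfTail _).ne_zero
    have hx : cfErr α k = -cfErr α (k + 1) / cfTail α (k + 1) := by
      rw [ih]; field_simp
    calc cfErr α (k + 2) = cfC α (k + 1) * cfErr α (k + 1) + cfErr α k := by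
          simp only [cfErr, cfP, cfQ]; push_cast; ring
      _ = -cfTail α (k + 2) * cfErr α (k + 1) := by
          rw [hx, cfTail_succ (k + 1)]; field_simp; ring

lemma cfErr_ne_zero (hirr : Irrational α) : ∀ k, cfErr α k ≠ 0
  | 0 => by simpa [cfErr, cfP, cfQ] using hirr.ne_zero
  | k + 1 => by
    rw [cfErr_succ hirr]
    exact mul_ne_zero (neg_ne_zero.2 (hirr.cfTail _).ne_zero) (cfErr_ne_zero hirr k)

lemma cfErr_mul_cfErr_succ_nonpos (hirr : Irrational α) (k : ℕ) :
    cfErr α k * cfErr α (k + 1) ≤ 0 := by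
  rw [cfErr_succ hirr]
  nlinarith [cfTail_succ_pos hirr k, sq_nonneg (cfErr α k)]

lemma cfEta_pos (hirr : Irrational α) (k : ℕ) : 0 < cfEta α k :=
  abs_pos.2 (cfErr_ne_zero hirr k)

lemma cfQ_succ_mul_cfEta_add_cfQ_mul_cfEta_succ (hirr : Irrational α) (hα : α ∈ Ioo 0 1)
    (k : ℕ) : (cfQ α (k + 1) : ℝ) * cfEta α k + cfQ α k * cfEta α (k + 1) = 1 := by
  have hq (j : ℕ) : (0 : ℝ) ≤ cfQ α j := (cfQ_pos hirr hα j).le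
  have hdet : cfQ α (k + 1) * cfErr α k - cfQ α k * cfErr α (k + 1) = (-1) ^ k := by
    have := congrArg (Int.cast : ℤ → ℝ) (cfP_mul_cfQ_sub_cfP_mul_cfQ (α := α) k)
    push_cast at this
    simp only [cfErr]
    linear_combination this
  have hsign : (cfQ α (k + 1) * cfErr α k) * (cfQ α k * cfErr α (k + 1)) ≤ 0 := by
    have := cfErr_mul_cfErr_succ_nonpos hirr k
    nlinarith [mul_nonneg (hq k) (hq (k + 1))]
  calc (cfQ α (k + 1) : ℝ) * cfEta α k + cfQ α k * cfEta α (k + 1)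
      = |cfQ α (k + 1) * cfErr α k| + |cfQ α k * cfErr α (k + 1)| := by
        rw [abs_mul, abs_mul, abs_of_nonneg (hq k), abs_of_nonneg (hq (k + 1))]; rfl
    _ = 1 := by
        rw [← abs_sub_eq_abs_add_abs_of_mul_nonpos hsign, hdet, abs_pow, abs_neg, abs_one, one_pow]

lemma cfQ_mul_cfEta_mul_ratios_add (hirr : Irrational α) (hα : α ∈ Ioo 0 1) (k : ℕ) :
    (cfQ α k * cfEta α k) * (cfQ α (k + 1) / cfQ α k + cfEta α (k + 1) / cfEta α k) = 1 := by
  have hq := (cfQ_pos hirr hα k).ne'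
  have hη := (cfEta_pos hirr k).ne'
  rw [← cfQ_succ_mul_cfEta_add_cfQ_mul_cfEta_succ hirr hα k]
  field_simp

theorem stmt6 (α : ℝ) (hirr : Irrational α) (hα : α ∈ Set.Ioo (0 : ℝ) 1)
    (K : Set ℕ) (hK : K.Infinite) (γ1 δ1 : ℝ)
    (hγ : Tendsto (fun k => (cfQ α (k + 1) : ℝ) / (cfQ α k : ℝ)) (atTop ⊓ 𝓟 K) (𝓝 γ1))
    (hδ : Tendsto (fun k => cfEta α (k + 1) / cfEta α k) (atTop ⊓ 𝓟 K) (𝓝 δ1)) :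
    Tendsto (fun k => (cfQ α k : ℝ) * cfEta α k) (atTop ⊓ 𝓟 K) (𝓝 (1 / (γ1 + δ1))) := by
  have : (atTop ⊓ 𝓟 K).NeBot := by
    rw [← Nat.cofinite_eq_atTop]
    exact hK.cofinite_inf_principal_neBot
  have hγ1 : 1 ≤ γ1 := ge_of_tendsto hγ <| .of_forall fun k =>
    (one_le_div (cfQ_pos hirr hα k)).2 (by exact_mod_cast cfQ_le_cfQ_succ hirr hα k)
  have hδ1 : 0 ≤ δ1 := ge_of_tendsto hδ <| .of_forall fun k =>
    div_nonneg (cfEta_pos hirr _).le (cfEta_pos hirr _).le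
  exact tendsto_of_mul_add_eq_one (cfQ_mul_cfEta_mul_ratios_add hirr hα) hγ hδ (by positivity)
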